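/- For the Lamplighter group action on X and the left Følner sequence (F_n^r) associated to a sequence r = (r_ℓ) in [0,1], the empirical measures μ_n^x = (1/|F_n^r|) Σ_{g∈F_n^r} δ_{gx} converge weak* to (1−r_b)·δ_{(∞,1)} + r_b·δ_{(∞,0)} when x = (b,1), b ∈ ℤ, and to r_b·δ_{(∞,1)} + (1−r_b)·δ_{(∞,0)} when x = (b,0). -/

import Mathlib

open Filter Topology

noncomputable section

/-- The shift `s ↦ s - 1` on the one-point compactification `ℤ ∪ {∞}`, fixing `∞`. -/
def shiftOP : Equiv.Perm (OnePoint ℤ) :=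
  (Equiv.optionCongr (Equiv.subRight (1 : ℤ)) : Equiv.Perm (Option ℤ))

/-- The phase space `X = (ℤ ∪ {∞}) × {0,1}`. -/
abbrev LampX : Type := OnePoint ℤ × Bool

/-- The transposition `f` swapping `(0,1)` and `(0,0)`. -/
def lampF : Equiv.Perm LampX :=
  haveI : DecidableEq LampX := Classical.decEq _
  Equiv.swap (((0 : ℤ) : OnePoint ℤ), true) (((0 : ℤ) : OnePoint ℤ), false)

/-- The shift `σ` on `X`, decrementing the integer coordinate. -/
def lampSigma : Equiv.Perm LampX := (shiftOP).prodCongr (Equiv.refl Bool)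

/-- `f_n = σ^{-n} ∘ f ∘ σ^n`. -/
def lampfn (n : ℤ) : Equiv.Perm LampX := lampSigma ^ (-n) * lampF * lampSigma ^ n

/-- The Lamplighter group `G = ⟨f, σ⟩`. -/
def lampG : Subgroup (Equiv.Perm LampX) := Subgroup.closure {lampF, lampSigma}

/-- For `l = [b_1, …, b_k]`, the composition `f_{b_k} ∘ ⋯ ∘ f_{b_1}`. -/
def lampProd (l : List ℤ) : Equiv.Perm LampX := (l.reverse.map lampfn).prod

open scoped symmDiff

/-- `f_𝐛` for a finite set `𝐛 ⊆ ℤ`: the composition `f_{b_m} ∘ ⋯ ∘ f_{b_1}` where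
`b_1 < ⋯ < b_m` enumerates `𝐛` increasingly. -/
def lampfB (b : Finset ℤ) : Equiv.Perm LampX := lampProd (b.sort (· ≤ ·))

/-! The element `σ^a ∘ f_𝐛` sends `(b, t)` to `(b - a, !t)` if `b ∈ 𝐛` and to `(b - a, t)`
otherwise. Hence `μ_n^{(b,t)}` is the mixture, with weight the frequency of `b` in `B_n`
(which tends to `r_b`), of the Birkhoff averages of the shift over `[-2^n, 2^n]` started at
`(b, !t)` and at `(b, t)`. Along the shift orbit of `(c, i)` a continuous function tends to its
value at `(∞, i)` off finite sets, so these Birkhoff averages tend to `h (∞, !t)` and `h (∞, t)`. -/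

open Finset OnePoint

lemma lampSigma_apply_coe (c : ℤ) (i : Bool) :
    lampSigma ((c : OnePoint ℤ), i) = (((c - 1 : ℤ) : OnePoint ℤ), i) :=
  rfl

lemma lampSigma_zpow_apply_coe (k c : ℤ) (i : Bool) :
    (lampSigma ^ k) ((c : OnePoint ℤ), i) = (((c - k : ℤ) : OnePoint ℤ), i) := by
  induction k using Int.induction_on generalizing c with
  | zero => simp
  | succ k ih =>
    rw [zpow_add_one, Equiv.Perm.mul_apply, lampSigma_apply_coe, ih]
    ring_nf
  | pred k ih =>
    have hinv : lampSigma⁻¹ ((c : OnePoint ℤ), i) = (((c + 1 : ℤ) : OnePoint ℤ), i) := by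
      rw [Equiv.Perm.inv_eq_iff_eq, lampSigma_apply_coe, add_sub_cancel_right]
    rw [zpow_sub_one, Equiv.Perm.mul_apply, hinv, ih]
    ring_nf

lemma lampF_apply_coe (c : ℤ) (i : Bool) :
    lampF ((c : OnePoint ℤ), i) = ((c : OnePoint ℤ), if c = 0 then !i else i) := by
  classical
  -- `lampF` carries `Classical.decEq`; trade it for the instance `classical` provides
  have hswap :
      lampF = Equiv.swap (((0 : ℤ) : OnePoint ℤ), true) (((0 : ℤ) : OnePoint ℤ), false) := by
    unfold lampF
    congr 1
    exact Subsingleton.elim _ _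
  rw [hswap, Equiv.swap_apply_def]
  split_ifs <;> cases i <;> simp_all

lemma lampfn_apply_coe (ℓ c : ℤ) (i : Bool) :
    lampfn ℓ ((c : OnePoint ℤ), i) = ((c : OnePoint ℤ), if c = ℓ then !i else i) := by
  rw [lampfn, Equiv.Perm.mul_apply, Equiv.Perm.mul_apply, lampSigma_zpow_apply_coe,
    lampF_apply_coe, lampSigma_zpow_apply_coe]
  simp only [sub_neg_eq_add, sub_add_cancel, sub_eq_zero]

lemma lampProd_cons (ℓ : ℤ) (l : List ℤ) : lampProd (ℓ :: l) = lampProd l * lampfn ℓ := by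
  simp [lampProd]

lemma lampProd_apply_coe {l : List ℤ} (hl : l.Nodup) (c : ℤ) (i : Bool) :
    lampProd l ((c : OnePoint ℤ), i) = ((c : OnePoint ℤ), if c ∈ l then !i else i) := by
  induction l generalizing i with
  | nil => rfl
  | cons ℓ l ih =>
    obtain ⟨hℓ, hl⟩ := List.nodup_cons.mp hl
    rw [lampProd_cons, Equiv.Perm.mul_apply, lampfn_apply_coe, ih hl]
    by_cases hc : c = ℓ
    · subst hc
      simp [hℓ]
    · simp [hc]

lemma lampfB_apply_coe (s : Finset ℤ) (c : ℤ) (i : Bool) :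
    lampfB s ((c : OnePoint ℤ), i) = ((c : OnePoint ℤ), if c ∈ s then !i else i) := by
  simp [lampfB, lampProd_apply_coe (s.sort_nodup _)]

lemma lampSigma_zpow_mul_lampfB_apply_coe (a : ℤ) (s : Finset ℤ) (c : ℤ) (i : Bool) :
    (lampSigma ^ a * lampfB s) ((c : OnePoint ℤ), i) =
      (((c - a : ℤ) : OnePoint ℤ), if c ∈ s then !i else i) := by
  rw [Equiv.Perm.mul_apply, lampfB_apply_coe, lampSigma_zpow_apply_coe]

lemma injective_lampSigma_zpow_mul_lampfB :
    Function.Injective (fun p : ℤ × Finset ℤ => lampSigma ^ p.1 * lampfB p.2) := by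
  rintro ⟨a₁, s₁⟩ ⟨a₂, s₂⟩ heq
  have happly (c : ℤ) := congrArg (fun g : Equiv.Perm LampX => g ((c : OnePoint ℤ), true)) heq
  simp only [lampSigma_zpow_mul_lampfB_apply_coe, Prod.mk.injEq, OnePoint.coe_eq_coe] at happly
  obtain rfl : a₁ = a₂ := by linarith [(happly 0).1]
  congr
  ext c
  have := (happly c).2
  by_cases h₁ : c ∈ s₁ <;> by_cases h₂ : c ∈ s₂ <;> simp [h₁, h₂] at this ⊢

theorem tendsto_sum_div_card_of_tendsto_cofinite {α ι : Type*} {φ : α → ℝ} {L : ℝ}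
    (hφ : Tendsto φ cofinite (𝓝 L)) {l : Filter ι} {S : ι → Finset α}
    (hS : Tendsto (fun n => #(S n)) l atTop) :
    Tendsto (fun n => (∑ x ∈ S n, φ x) / #(S n)) l (𝓝 L) := by
  classical
  rw [Metric.tendsto_nhds]
  intro ε hε
  have hT : {x | ε / 2 ≤ |φ x - L|}.Finite := by
    have := hφ (Metric.ball_mem_nhds L (half_pos hε))
    rw [Filter.mem_map, mem_cofinite] at this
    convert this using 1
    ext x
    simp [Real.dist_eq]
  -- off the finite set `T` the summands are within `ε / 2` of `L`, and `T` contributes at most `C`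
  set T := hT.toFinset
  set C := ∑ x ∈ T, |φ x - L|
  filter_upwards [(tendsto_natCast_atTop_atTop.comp hS).eventually_gt_atTop (2 * C / ε)] with n hn
  have hpos : (0 : ℝ) < #(S n) := lt_of_le_of_lt (by positivity) hn
  have hpoint (x : α) : |φ x - L| ≤ ε / 2 + if x ∈ T then |φ x - L| else 0 := by
    by_cases hx : x ∈ T
    · simp only [hx, if_true]
      linarith
    · simp only [hx, if_false, add_zero]
      exact (by simpa [T] using hx : |φ x - L| < ε / 2).le
  have hsum : ∑ x ∈ S n, |φ x - L| ≤ #(S n) * (ε / 2) + C := calc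
    _ ≤ ∑ x ∈ S n, (ε / 2 + if x ∈ T then |φ x - L| else 0) := sum_le_sum fun x _ => hpoint x
    _ = #(S n) * (ε / 2) + ∑ x ∈ S n ∩ T, |φ x - L| := by
      rw [sum_add_distrib, sum_const, nsmul_eq_mul, sum_ite_mem]
    _ ≤ _ := by
      gcongr
      exact sum_le_sum_of_subset_of_nonneg inter_subset_right fun x _ _ => abs_nonneg _
  have hcentre : (∑ x ∈ S n, φ x) / #(S n) - L = (∑ x ∈ S n, (φ x - L)) / #(S n) := by
    rw [sum_sub_distrib, sum_const, nsmul_eq_mul]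
    field_simp
  rw [Function.comp_apply, div_lt_iff₀ hε] at hn
  calc dist ((∑ x ∈ S n, φ x) / #(S n)) L = |∑ x ∈ S n, (φ x - L)| / #(S n) := by
        rw [Real.dist_eq, hcentre, abs_div, abs_of_pos hpos]
    _ ≤ (∑ x ∈ S n, |φ x - L|) / #(S n) := by gcongr; exact abs_sum_le_sum_abs _ _
    _ ≤ (#(S n) * (ε / 2) + C) / #(S n) := by gcongr
    _ < ε := by rw [div_lt_iff₀ hpos]; linarith

def lampSigmaAverage (I : Finset ℤ) (h : LampX → ℝ) (y : LampX) : ℝ :=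
  (∑ a ∈ I, h ((lampSigma ^ a) y)) / #I

theorem tendsto_lampSigmaAverage (h : C(LampX, ℝ)) (c : ℤ) (i : Bool) {ι : Type*}
    {l : Filter ι} {S : ι → Finset ℤ} (hS : Tendsto (fun n => #(S n)) l atTop) :
    Tendsto (fun n => lampSigmaAverage (S n) h ((c : OnePoint ℤ), i)) l (𝓝 (h (∞, i))) := by
  refine tendsto_sum_div_card_of_tendsto_cofinite ?_ hS
  simp only [lampSigma_zpow_apply_coe]
  have hcoe : Tendsto (fun a : ℤ => ((c - a : ℤ) : OnePoint ℤ)) cofinite (𝓝 ∞) := by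
    have := OnePoint.tendsto_coe_infty (X := ℤ)
    rw [coclosedCompact_eq_cocompact, cocompact_eq_cofinite] at this
    exact this.comp (sub_right_injective.tendsto_cofinite)
  exact h.continuous.continuousAt.tendsto.comp (hcoe.prodMk_nhds tendsto_const_nhds)

lemma sum_ite_div_card {α : Type*} {s : Finset α} (hs : s.Nonempty) (p : α → Prop)
    [DecidablePred p] (u v : ℝ) :
    (∑ x ∈ s, if p x then u else v) / #s =
      #(s.filter p) / #s * u + (1 - #(s.filter p) / #s) * v := by
  have hs₀ : (#s : ℝ) ≠ 0 := Nat.cast_ne_zero.mpr hs.card_pos.ne'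
  have hcompl : (#(s.filter fun x => ¬p x) : ℝ) = #s - #(s.filter p) := by
    rw [← card_filter_add_card_filter_not (s := s) p]
    push_cast
    ring
  rw [sum_ite, sum_const, sum_const, nsmul_eq_mul, nsmul_eq_mul, hcompl]
  field_simp

lemma lamp_empirical_average_eq [DecidableEq (Equiv.Perm LampX)] (I : Finset ℤ)
    {B : Finset (Finset ℤ)} (hB : B.Nonempty) (h : LampX → ℝ) (b : ℤ) (t : Bool) :
    (∑ g ∈ (I ×ˢ B).image (fun p => lampSigma ^ p.1 * lampfB p.2), h (g ((b : OnePoint ℤ), t))) /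
        #((I ×ˢ B).image (fun p => lampSigma ^ p.1 * lampfB p.2)) =
      #(B.filter fun s => b ∈ s) / #B * lampSigmaAverage I h ((b : OnePoint ℤ), !t) +
        (1 - #(B.filter fun s => b ∈ s) / #B) * lampSigmaAverage I h ((b : OnePoint ℤ), t) := by
  rw [sum_image injective_lampSigma_zpow_mul_lampfB.injOn,
    card_image_of_injective _ injective_lampSigma_zpow_mul_lampfB, card_product,
    sum_product_right, ← sum_ite_div_card hB, Nat.cast_mul, ← div_div]
  congr 1
  rw [sum_div]
  refine sum_congr rfl fun s _ => ?_
  simp only [Equiv.Perm.mul_apply, lampfB_apply_coe]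
  split_ifs <;> rfl

lemma tendsto_card_filter_mem_div_card {B : ℕ → Finset (Finset ℤ)} {r : ℤ → ℝ}
    (hB : ∀ n : ℕ, ∀ ℓ₀ : ℤ, -(n : ℤ) ≤ ℓ₀ → ℓ₀ ≤ n →
      |(#((B n).filter fun s => ℓ₀ ∈ s) : ℝ) / #(B n) - r ℓ₀| ≤ ((2 : ℝ) ^ (2 * n))⁻¹)
    (ℓ₀ : ℤ) :
    Tendsto (fun n => (#((B n).filter fun s => ℓ₀ ∈ s) : ℝ) / #(B n)) atTop (𝓝 (r ℓ₀)) := by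
  have hdecay : Tendsto (fun n : ℕ => ((2 : ℝ) ^ (2 * n))⁻¹) atTop (𝓝 0) := by
    simpa only [pow_mul, Pi.inv_def] using
      (tendsto_pow_atTop_atTop_of_one_lt (by norm_num : (1 : ℝ) < 2 ^ 2)).inv_tendsto_atTop
  rw [tendsto_iff_norm_sub_tendsto_zero]
  refine squeeze_zero_norm' ?_ hdecay
  filter_upwards [eventually_ge_atTop ℓ₀.natAbs] with n hn
  rw [norm_norm, Real.norm_eq_abs]
  exact hB n ℓ₀ (by omega) (by omega)

lemma tendsto_card_Icc_neg_two_pow :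
    Tendsto (fun n : ℕ => #(Icc (-(2 ^ n : ℤ)) (2 ^ n))) atTop atTop := by
  refine tendsto_atTop_mono (fun n => ?_) tendsto_id
  have : (n : ℤ) < 2 ^ n := by exact_mod_cast Nat.lt_two_pow_self
  rw [id, Int.card_Icc]
  omega

/-- For the left Følner sequence `F_n^r = {σ^a ∘ f_𝐛 : a ∈ [-2^n,2^n], 𝐛 ∈ B_n}`
associated to a sequence `r = (r_ℓ)` in `[0,1]` (where `B_n` satisfies
`| |{𝐛 ∈ B_n : ℓ₀ ∈ 𝐛}|/|B_n| − r_{ℓ₀} | ≤ 2^{−2n}` for `ℓ₀ ∈ [−n,n]`), the empirical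
measures `μ_n^x = (1/|F_n^r|) Σ_{g∈F_n^r} δ_{gx}` converge weak* to
`(1−r_b)·δ_{(∞,1)} + r_b·δ_{(∞,0)}` if `x = (b,1)` and to
`r_b·δ_{(∞,1)} + (1−r_b)·δ_{(∞,0)}` if `x = (b,0)`, for every `b ∈ ℤ`. -/
theorem lamplighter_Fnr_averages :
    ∀ r : ℤ → ℝ, (∀ ℓ, r ℓ ∈ Set.Icc (0:ℝ) 1) →
    haveI : DecidableEq (Equiv.Perm LampX) := Classical.decEq _
    ∀ B : ℕ → Finset (Finset ℤ),
    (∀ n, (B n).Nonempty) →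
    (∀ n, ∀ b ∈ B n, b ⊆ Finset.Icc (-(2 ^ n : ℤ)) (2 ^ n)) →
    (∀ n : ℕ, ∀ ℓ₀ : ℤ, -(n : ℤ) ≤ ℓ₀ → ℓ₀ ≤ (n : ℤ) →
      |(((B n).filter (fun b => ℓ₀ ∈ b)).card : ℝ) / ((B n).card : ℝ) - r ℓ₀|
        ≤ ((2 : ℝ) ^ (2 * n))⁻¹) →
    ∀ F : ℕ → Finset (Equiv.Perm LampX),
    (∀ n, F n = (Finset.Icc (-(2 ^ n : ℤ)) (2 ^ n) ×ˢ B n).image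
        (fun p => lampSigma ^ p.1 * lampfB p.2)) →
    ∀ b : ℤ, ∀ h : C(LampX, ℝ),
      (Tendsto (fun n => (∑ g ∈ F n, h (g (((b : ℤ) : OnePoint ℤ), true))) / (F n).card)
        atTop (𝓝 ((1 - r b) * h (OnePoint.infty, true) + r b * h (OnePoint.infty, false))))
      ∧
      (Tendsto (fun n => (∑ g ∈ F n, h (g (((b : ℤ) : OnePoint ℤ), false))) / (F n).card)
        atTop (𝓝 (r b * h (OnePoint.infty, true) + (1 - r b) * h (OnePoint.infty, false)))) := by
  intro r _ B hB _ hBr F hF b h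
  have hlim (t : Bool) : Tendsto (fun n => (∑ g ∈ F n, h (g ((b : OnePoint ℤ), t))) / #(F n))
      atTop (𝓝 (r b * h (∞, !t) + (1 - r b) * h (∞, t))) := by
    have hfreq := tendsto_card_filter_mem_div_card hBr b
    have havg (i : Bool) := tendsto_lampSigmaAverage h b i tendsto_card_Icc_neg_two_pow
    refine ((hfreq.mul (havg !t)).add ((hfreq.const_sub 1).mul (havg t))).congr fun n => ?_
    classical
    rw [hF n]
    exact (lamp_empirical_average_eq _ (hB n) h b t).symm
  exact ⟨by simpa only [Bool.not_true, add_comm] using hlim true,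
    by simpa only [Bool.not_false] using hlim false⟩
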